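/- arXiv:2003.06152 — 2 statements merged into one kernel-verified Lean document; each statement's English description precedes it below -/
import Mathlib

section
/- Let W = {w ∈ ℝ² : ‖w‖ ≤ 5}. There exist absolute constants c₁, c₂ > 0 with the following property: for every regularizer r : W → ℝ that is 1-Lipschitz and λ-strongly convex, there exist a nonnegative convex function F : W → ℝ that is 1-Lipschitz and has 1-Lipschitz gradient, and a point w_r ∈ W, such that for every horizon T and step size η with 1/T² < η < 1 and T ≥ c₁/(λη), the averaged gradient-descent iterate w_F on F satisfies F(w_r) ≤ F(w_F) and r(w_r) ≤ r(w_F) − c₂·λ. -/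
/-!
Let `q` minimize `r` on the segment `S = {2} × [0, 1]`; by strong convexity,
`r a ≥ r q + (λ/2) ‖a - q‖²` for `a ∈ S`. The losses
`F_μ w = h₇(2 - w₀)/50 + μ h₁(3/5 - ⟪u, w⟫)`, with `h_M` the hinge smoothed so that its slope
is capped at `M` and `u = (24, 7)/25`, all vanish on `S`. Gradient descent on `F_μ` approaches
the line `w₀ = 2` geometrically, so the averaged iterate is within `100/(ηT) ≤ λ/10⁴` of the point
`a = (2, y) ∈ S`, where `y` is its second coordinate. For `μ = 0` the iterates stay on the axis and
`y = 0`; for `μ = 4/5` the second term acts during the first `O(1/η)` steps and leaves `y ≥ 1/25`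
(here `λ ≤ 1/5`, forced by Lipschitz continuity, makes `T` large enough). Taking `μ = 0` when
`q₁ ≥ 1/50` and `μ = 4/5` otherwise gives `|y - q₁| ≥ 1/50`, hence
`r(w_F) ≥ r a - λ/10⁴ ≥ r q + λ/10⁴`, while `F q = 0 ≤ F(w_F)`.
-/

open scoped RealInnerProductSpace
open MeasureTheory Metric

noncomputable section

abbrev Euc (d : ℕ) := EuclideanSpace ℝ (Fin d)

/-- Euclidean projection onto the closed ball of radius `R` centered at the origin. -/
def projB {d : ℕ} (R : ℝ) (w : Euc d) : Euc d := if ‖w‖ ≤ R then w else (R / ‖w‖) • w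

/-- `gdIter R η g t` is the `(t+1)`-st iterate `w⁽ᵗ⁺¹⁾` of projected gradient descent
(projection onto the ball of radius `R`), started at `w⁽¹⁾ = 0`, where `g t` is the
gradient field used at step `t`. -/
def gdIter {d : ℕ} (R η : ℝ) (g : ℕ → Euc d → Euc d) : ℕ → Euc d
  | 0 => 0
  | t + 1 => projB R (gdIter R η g t - η • g t (gdIter R η g t))

/-- The averaged iterate `(1/T) ∑_{t=1}^T w⁽ᵗ⁾`. -/
def gdAvg {d : ℕ} (R η : ℝ) (g : ℕ → Euc d → Euc d) (T : ℕ) : Euc d :=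
  (T : ℝ)⁻¹ • ∑ t ∈ Finset.range T, gdIter R η g t

/-- The output of gradient descent on the single function `F`, projected onto the
ball of radius 5, after `T` steps with step size `η`. -/
def gdOut (F : Euc 2 → ℝ) (η : ℝ) (T : ℕ) : Euc 2 :=
  gdAvg 5 η (fun _ w => gradient F w) T

/-- `r` is `λ`-strongly convex on `W`:
`r(w₁) ≥ r(w₂) + ⟨∇r(w₂), w₁ − w₂⟩ + λ‖w₁ − w₂‖²` for all `w₁, w₂ ∈ W`. -/
def StronglyConvexOn' (W : Set (Euc 2)) (lam : ℝ) (r : Euc 2 → ℝ) : Prop :=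
  ∀ w₁ ∈ W, ∀ w₂ ∈ W,
    r w₂ + (inner ℝ (gradient r w₂) (w₁ - w₂) : ℝ) + lam * ‖w₁ - w₂‖ ^ 2 ≤ r w₁

open scoped NNReal

def clip (M : ℝ≥0) (t : ℝ) : ℝ := min (max t 0) M

def smoothHinge (M : ℝ≥0) (u : ℝ) : ℝ := ∫ t in (0 : ℝ)..u, clip M t

section Clip
variable {M : ℝ≥0}

lemma clip_nonneg (t : ℝ) : 0 ≤ clip M t := le_min (le_max_right _ _) M.2

lemma clip_le (t : ℝ) : clip M t ≤ M := min_le_right _ _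

lemma clip_of_mem_Icc {t : ℝ} (h0 : 0 ≤ t) (hM : t ≤ M) : clip M t = t := by
  rw [clip, max_eq_left h0, min_eq_left hM]

lemma clip_one_of_le_one {t : ℝ} (h : t ≤ 1) : clip 1 t = max t 0 :=
  min_eq_left (by simpa using h)

lemma monotone_clip : Monotone (clip M) := fun _ _ h => min_le_min_right _ (max_le_max_right _ h)

lemma lipschitzWith_clip : LipschitzWith 1 (clip M) := by
  show LipschitzWith 1 fun t => min (max t 0) (M : ℝ)
  simpa using ((LipschitzWith.id.max_const 0).min_const (M : ℝ))

lemma continuous_clip : Continuous (clip M) := lipschitzWith_clip.continuous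

lemma hasDerivAt_smoothHinge (u : ℝ) : HasDerivAt (smoothHinge M) (clip M u) u :=
  intervalIntegral.integral_hasDerivAt_right (continuous_clip.intervalIntegrable _ _)
    (continuous_clip.stronglyMeasurableAtFilter _ _) continuous_clip.continuousAt

lemma smoothHinge_of_nonpos {u : ℝ} (hu : u ≤ 0) : smoothHinge M u = 0 := by
  rw [smoothHinge, intervalIntegral.integral_congr (g := fun _ => (0 : ℝ)),
    intervalIntegral.integral_zero]
  intro t ht
  rw [Set.uIcc_of_ge hu] at ht
  simp [clip, max_eq_right ht.2]

lemma smoothHinge_nonneg (u : ℝ) : 0 ≤ smoothHinge M u := by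
  rcases le_total u 0 with hu | hu
  · exact (smoothHinge_of_nonpos hu).ge
  · exact intervalIntegral.integral_nonneg hu fun t _ => clip_nonneg t

lemma lipschitzWith_smoothHinge : LipschitzWith M (smoothHinge M) :=
  lipschitzWith_of_nnnorm_deriv_le (fun u => (hasDerivAt_smoothHinge u).differentiableAt)
    fun u => by
      rw [(hasDerivAt_smoothHinge u).deriv, ← NNReal.coe_le_coe, coe_nnnorm,
        Real.norm_of_nonneg (clip_nonneg u)]
      exact clip_le u

lemma convexOn_smoothHinge : ConvexOn ℝ Set.univ (smoothHinge M) :=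
  Monotone.convexOn_univ_of_deriv (fun u => (hasDerivAt_smoothHinge u).differentiableAt)
    (by rw [funext fun u => (hasDerivAt_smoothHinge (M := M) u).deriv]; exact monotone_clip)

end Clip

section Ridge
variable {E : Type*} [NormedAddCommGroup E] [InnerProductSpace ℝ E] {φ : ℝ → ℝ} (c : ℝ) (v : E)

lemma hasGradientAt_comp_sub_inner [CompleteSpace E] {φ' : ℝ → ℝ}
    (hφ : ∀ t, HasDerivAt φ (φ' t) t) (w : E) :
    HasGradientAt (fun w => φ (c - ⟪v, w⟫)) (-(φ' (c - ⟪v, w⟫) • v)) w := by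
  rw [hasGradientAt_iff_hasFDerivAt]
  refine ((hφ (c - ⟪v, w⟫)).comp_hasFDerivAt w
    ((innerSL ℝ v).hasFDerivAt.const_sub c)).congr_fderiv ?_
  ext x
  simp

lemma lipschitzWith_const_sub_inner : LipschitzWith ‖v‖₊ fun w : E => c - ⟪v, w⟫ := by
  refine LipschitzWith.of_dist_le_mul fun x y => ?_
  rw [dist_sub_left, Real.dist_eq, ← inner_sub_right, dist_eq_norm, coe_nnnorm]
  exact abs_real_inner_le_norm v (x - y)

lemma LipschitzWith.comp_const_sub_inner {K : ℝ≥0} (hφ : LipschitzWith K φ) :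
    LipschitzWith (K * ‖v‖₊) fun w => φ (c - ⟪v, w⟫) :=
  hφ.comp (lipschitzWith_const_sub_inner c v)

lemma LipschitzWith.comp_const_sub_inner_smul {K : ℝ≥0} (hφ : LipschitzWith K φ) :
    LipschitzWith (‖v‖₊ * (K * ‖v‖₊)) fun w => φ (c - ⟪v, w⟫) • v := by
  have hsmul : LipschitzWith ‖v‖₊ fun s : ℝ => s • v :=
    LipschitzWith.of_dist_le_mul fun a b => by
      rw [dist_eq_norm, ← sub_smul, norm_smul, mul_comm]; rfl
  exact hsmul.comp (hφ.comp_const_sub_inner c v)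

lemma ConvexOn.comp_const_sub_inner (hφ : ConvexOn ℝ Set.univ φ) :
    ConvexOn ℝ Set.univ fun w : E => φ (c - ⟪v, w⟫) := by
  exact hφ.comp_affineMap (AffineMap.const ℝ E c - (innerₛₗ ℝ v).toAffineMap)

end Ridge

lemma HasGradientAt.const_mul_add_const_mul {E : Type*} [NormedAddCommGroup E]
    [InnerProductSpace ℝ E] [CompleteSpace E] {f g : E → ℝ} {f' g' x : E} (a b : ℝ)
    (hf : HasGradientAt f f' x) (hg : HasGradientAt g g' x) :
    HasGradientAt (fun x => a * f x + b * g x) (a • f' + b • g') x := by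
  rw [hasGradientAt_iff_hasFDerivAt] at *
  exact ((hf.const_mul a).add (hg.const_mul b)).congr_fderiv (by simp)

lemma inner_toLp_two (a b : ℝ) (w : Euc 2) : ⟪!₂[a, b], w⟫ = a * w 0 + b * w 1 := by
  simp [PiLp.inner_apply, Fin.sum_univ_two]; ring

lemma norm_sq_eq_two (w : Euc 2) : ‖w‖ ^ 2 = w 0 ^ 2 + w 1 ^ 2 := by
  simp [EuclideanSpace.norm_sq_eq, Fin.sum_univ_two]

def dirX : Euc 2 := !₂[1, 0]

def dirU : Euc 2 := !₂[24/25, 7/25]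

lemma inner_dirX (w : Euc 2) : ⟪dirX, w⟫ = w 0 := by simp [dirX, inner_toLp_two]

lemma inner_dirU (w : Euc 2) : ⟪dirU, w⟫ = 24/25 * w 0 + 7/25 * w 1 := inner_toLp_two _ _ w

lemma nnnorm_dirX : ‖dirX‖₊ = 1 := by
  rw [← NNReal.coe_inj, coe_nnnorm, NNReal.coe_one, ← sq_eq_sq₀ (norm_nonneg _) zero_le_one,
    norm_sq_eq_two]
  simp [dirX]

lemma nnnorm_dirU : ‖dirU‖₊ = 1 := by
  rw [← NNReal.coe_inj, coe_nnnorm, NNReal.coe_one, ← sq_eq_sq₀ (norm_nonneg _) zero_le_one,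
    norm_sq_eq_two]
  norm_num [dirU]

def hardLoss (μ : ℝ) (w : Euc 2) : ℝ :=
  1/50 * smoothHinge 7 (2 - ⟪dirX, w⟫) + μ * smoothHinge 1 (3/5 - ⟪dirU, w⟫)

section HardLoss
variable {μ : ℝ}

lemma gradient_hardLoss (w : Euc 2) :
    gradient (hardLoss μ) w = (1/50 : ℝ) • -(clip 7 (2 - ⟪dirX, w⟫) • dirX)
      + μ • -(clip 1 (3/5 - ⟪dirU, w⟫) • dirU) :=
  (HasGradientAt.const_mul_add_const_mul _ _
    (hasGradientAt_comp_sub_inner _ _ hasDerivAt_smoothHinge w)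
    (hasGradientAt_comp_sub_inner _ _ hasDerivAt_smoothHinge w)).gradient

lemma hardLoss_nonneg (hμ : 0 ≤ μ) (w : Euc 2) : 0 ≤ hardLoss μ w :=
  add_nonneg (mul_nonneg (by norm_num) (smoothHinge_nonneg _))
    (mul_nonneg hμ (smoothHinge_nonneg _))

lemma convexOn_hardLoss (hμ : 0 ≤ μ) : ConvexOn ℝ Set.univ (hardLoss μ) :=
  ((convexOn_smoothHinge.comp_const_sub_inner 2 dirX).smul (by norm_num)).add
    ((convexOn_smoothHinge.comp_const_sub_inner _ dirU).smul hμ)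

lemma hardLoss_lipschitz_const_le {K₁ K₂ : ℝ≥0} (hμ : μ ∈ Set.Icc 0 (4/5)) (hK₁ : K₁ ≤ 7)
    (hK₂ : K₂ ≤ 1) :
    ‖(1/50 : ℝ)‖₊ * K₁ + ‖μ‖₊ * K₂ ≤ 1 := by
  rw [← NNReal.coe_le_coe] at *
  push_cast at *
  rw [Real.norm_of_nonneg (by norm_num), Real.norm_of_nonneg hμ.1]
  nlinarith [hμ.2]

lemma lipschitzWith_hardLoss (hμ : μ ∈ Set.Icc 0 (4/5)) : LipschitzWith 1 (hardLoss μ) := by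
  have h₁ := (lipschitzWith_smul (1/50 : ℝ)).comp
    ((lipschitzWith_smoothHinge (M := 7)).comp_const_sub_inner 2 dirX)
  have h₂ := (lipschitzWith_smul μ).comp
    ((lipschitzWith_smoothHinge (M := 1)).comp_const_sub_inner (3/5) dirU)
  rw [nnnorm_dirX] at h₁
  rw [nnnorm_dirU] at h₂
  exact (h₁.add h₂).weaken (hardLoss_lipschitz_const_le hμ (by simp) (by simp))

lemma lipschitzWith_gradient_hardLoss (hμ : μ ∈ Set.Icc 0 (4/5)) :
    LipschitzWith 1 (gradient (hardLoss μ)) := by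
  have h₁ := (lipschitzWith_smul (1/50 : ℝ)).comp
    ((lipschitzWith_clip (M := 7)).comp_const_sub_inner_smul 2 dirX).neg
  have h₂ := (lipschitzWith_smul μ).comp
    ((lipschitzWith_clip (M := 1)).comp_const_sub_inner_smul (3/5) dirU).neg
  rw [nnnorm_dirX] at h₁
  rw [nnnorm_dirU] at h₂
  rw [funext gradient_hardLoss]
  exact (h₁.add h₂).weaken (hardLoss_lipschitz_const_le hμ (by norm_num) (by simp))

end HardLoss

-- The iterates of GD on `hardLoss μ` stay here, where the projection onto the ball is inactive.
def wedge : Set (Euc 2) := {w | 0 ≤ w 1 ∧ 24 * w 1 ≤ 7 * w 0 ∧ w 0 ≤ 2}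

def deficit (w : Euc 2) : ℝ := max (3/5 - ⟪dirU, w⟫) 0

def hardStep (μ η : ℝ) (w : Euc 2) : Euc 2 :=
  !₂[w 0 + η * ((2 - w 0) / 50 + 24/25 * μ * deficit w), w 1 + η * (7/25 * μ * deficit w)]

def hardTraj (μ η : ℝ) : ℕ → Euc 2 := gdIter 5 η fun _ w => gradient (hardLoss μ) w

@[simp] lemma hardTraj_zero (μ η : ℝ) : hardTraj μ η 0 = 0 := rfl

section Wedge
variable {μ η : ℝ} {w : Euc 2}

lemma convex_wedge : Convex ℝ wedge := by
  rintro x ⟨hx₁, hx₂, hx₃⟩ y ⟨hy₁, hy₂, hy₃⟩ a b ha hb hab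
  simp only [wedge, Set.mem_ofPred_eq, PiLp.add_apply, PiLp.smul_apply, smul_eq_mul]
  refine ⟨by positivity, by nlinarith, by nlinarith⟩

lemma norm_le_of_mem_wedge (hw : w ∈ wedge) : ‖w‖ ≤ 5 := by
  obtain ⟨h₁, h₂, h₃⟩ := hw
  nlinarith [norm_sq_eq_two w, norm_nonneg w]

lemma inner_dirU_nonneg (hw : w ∈ wedge) : 0 ≤ ⟪dirU, w⟫ := by
  obtain ⟨h₁, h₂, -⟩ := hw
  rw [inner_dirU]; nlinarith

lemma deficit_nonneg (w : Euc 2) : 0 ≤ deficit w := le_max_right _ _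

lemma deficit_le (hw : w ∈ wedge) : deficit w ≤ 3/5 :=
  max_le (by linarith [inner_dirU_nonneg hw]) (by norm_num)

lemma sub_smul_gradient_hardLoss (hw : w ∈ wedge) :
    w - η • gradient (hardLoss μ) w = hardStep μ η w := by
  obtain ⟨h₁, h₂, h₃⟩ := hw
  have h₇ : clip 7 (2 - ⟪dirX, w⟫) = 2 - w 0 := by
    rw [inner_dirX]; exact clip_of_mem_Icc (by linarith) (by push_cast; linarith)
  have h₁' : clip 1 (3/5 - ⟪dirU, w⟫) = deficit w :=
    clip_one_of_le_one (by linarith [inner_dirU_nonneg ⟨h₁, h₂, h₃⟩])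
  rw [gradient_hardLoss, h₇, h₁']
  ext i
  fin_cases i <;>
    simp only [hardStep, dirX, dirU, PiLp.sub_apply, PiLp.add_apply, PiLp.smul_apply,
      PiLp.neg_apply, PiLp.toLp_apply, smul_eq_mul, Fin.zero_eta, Fin.mk_one, Matrix.cons_val_zero,
      Matrix.cons_val_one] <;>
    ring

lemma hardStep_mem_wedge (hμ : μ ∈ Set.Icc 0 (4/5)) (hη : η ∈ Set.Icc 0 1) (hw : w ∈ wedge) :
    hardStep μ η w ∈ wedge := by
  have hm₀ := deficit_nonneg w
  have hm₁ := deficit_le hw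
  obtain ⟨h₁, h₂, h₃⟩ := hw
  obtain ⟨hμ₀, hμ₁⟩ := hμ
  obtain ⟨hη₀, hη₁⟩ := hη
  simp only [wedge, hardStep, Set.mem_ofPred_eq, Matrix.cons_val_zero,
    Matrix.cons_val_one]
  refine ⟨by positivity, by nlinarith [mul_nonneg hη₀ (sub_nonneg.2 h₃)], ?_⟩
  rcases hm₀.eq_or_lt with hm | hm
  · rw [← hm]; nlinarith [mul_nonneg hη₀ (sub_nonneg.2 h₃)]
  · -- a positive deficit forces `w 0 < 5/8`, far from the boundary `w 0 = 2`
    have hx : w 0 < 5/8 := by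
      have := lt_max_iff.1 hm
      rw [inner_dirU] at this
      rcases this with h | h <;> linarith
    nlinarith [mul_le_mul hμ₁ hm₁ hm₀ (by norm_num : (0 : ℝ) ≤ 4/5)]

end Wedge

lemma sum_range_le_div_of_mul_le_sub {d : ℕ → ℝ} {ρ : ℝ} (hρ : 0 < ρ)
    (hd : ∀ t, ρ * d t ≤ d t - d (t + 1)) {T : ℕ} (hT : 0 ≤ d T) :
    ∑ t ∈ Finset.range T, d t ≤ d 0 / ρ := by
  rw [le_div_iff₀ hρ, Finset.sum_mul]
  calc ∑ t ∈ Finset.range T, d t * ρ ≤ ∑ t ∈ Finset.range T, (d t - d (t + 1)) :=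
        Finset.sum_le_sum fun t _ => by linarith [hd t]
    _ = d 0 - d T := Finset.sum_range_sub' d T
    _ ≤ d 0 := by linarith

section Trajectory
variable {μ η : ℝ} (hμ : μ ∈ Set.Icc 0 (4/5)) (hη : η ∈ Set.Icc 0 1)
include hμ hη

lemma hardTraj_succ_of_mem_wedge {t : ℕ} (ht : hardTraj μ η t ∈ wedge) :
    hardTraj μ η (t + 1) = hardStep μ η (hardTraj μ η t) := by
  show projB 5 (hardTraj μ η t - η • gradient (hardLoss μ) (hardTraj μ η t)) = _
  rw [sub_smul_gradient_hardLoss ht, projB,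
    if_pos (norm_le_of_mem_wedge (hardStep_mem_wedge hμ hη ht))]

lemma hardTraj_mem_wedge (t : ℕ) : hardTraj μ η t ∈ wedge := by
  induction t with
  | zero => simp [wedge]
  | succ t ih => rw [hardTraj_succ_of_mem_wedge hμ hη ih]; exact hardStep_mem_wedge hμ hη ih

lemma hardTraj_succ (t : ℕ) : hardTraj μ η (t + 1) = hardStep μ η (hardTraj μ η t) :=
  hardTraj_succ_of_mem_wedge hμ hη (hardTraj_mem_wedge hμ hη t)

lemma hardTraj_succ_zero (t : ℕ) : hardTraj μ η (t + 1) 0 = hardTraj μ η t 0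
    + η * ((2 - hardTraj μ η t 0) / 50 + 24/25 * μ * deficit (hardTraj μ η t)) := by
  simp [hardTraj_succ hμ hη, hardStep]

lemma hardTraj_succ_one (t : ℕ) : hardTraj μ η (t + 1) 1 = hardTraj μ η t 1
    + η * (7/25 * μ * deficit (hardTraj μ η t)) := by
  simp [hardTraj_succ hμ hη, hardStep]

lemma inner_dirU_hardTraj_succ (t : ℕ) : ⟪dirU, hardTraj μ η (t + 1)⟫ = ⟪dirU, hardTraj μ η t⟫
    + η * (12/625 * (2 - hardTraj μ η t 0) + μ * deficit (hardTraj μ η t)) := by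
  rw [inner_dirU, inner_dirU, hardTraj_succ_zero hμ hη, hardTraj_succ_one hμ hη]
  ring

lemma sum_two_sub_hardTraj_le (hη₀ : 0 < η) (T : ℕ) :
    ∑ t ∈ Finset.range T, (2 - hardTraj μ η t 0) ≤ 100 / η := by
  have hstep (t : ℕ) : η / 50 * (2 - hardTraj μ η t 0)
      ≤ (2 - hardTraj μ η t 0) - (2 - hardTraj μ η (t + 1) 0) := by
    have := mul_nonneg (mul_nonneg hμ.1 (deficit_nonneg (hardTraj μ η t))) hη.1
    rw [hardTraj_succ_zero hμ hη]
    nlinarith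
  calc ∑ t ∈ Finset.range T, (2 - hardTraj μ η t 0)
      ≤ (2 - hardTraj μ η 0 0) / (η / 50) := sum_range_le_div_of_mul_le_sub (by positivity) hstep
        (sub_nonneg.2 (hardTraj_mem_wedge hμ hη T).2.2)
    _ = 100 / η := by simp only [hardTraj_zero, PiLp.zero_apply, sub_zero]; ring

lemma monotone_hardTraj_one : Monotone fun t => hardTraj μ η t 1 :=
  monotone_nat_of_le_succ fun t => by
    rw [hardTraj_succ_one hμ hη]
    exact le_add_of_nonneg_right <| mul_nonneg hη.1 <|
      mul_nonneg (mul_nonneg (by norm_num) hμ.1) (deficit_nonneg _)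

-- each step changes `w 1 - 7/25 ⟪dirU, w⟫` by `-(84/15625) η (2 - w 0) ≥ -(168/15625) η`
lemma hardTraj_one_ge_sub (t : ℕ) :
    7/25 * ⟪dirU, hardTraj μ η t⟫ - 168/15625 * η * t ≤ hardTraj μ η t 1 := by
  induction t with
  | zero => simp
  | succ t ih =>
    obtain ⟨h₁, h₂, -⟩ := hardTraj_mem_wedge hμ hη t
    rw [inner_dirU_hardTraj_succ hμ hη, hardTraj_succ_one hμ hη]
    push_cast
    nlinarith [hη.1]

lemma min_le_inner_dirU_hardTraj (t : ℕ) :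
    min (3/10) (3/10 * μ * η * t) ≤ ⟪dirU, hardTraj μ η t⟫ := by
  induction t with
  | zero => simp
  | succ t ih =>
    set q := ⟪dirU, hardTraj μ η t⟫
    have hx := (hardTraj_mem_wedge hμ hη t).2.2
    have hm := mul_nonneg hμ.1 (deficit_nonneg (hardTraj μ η t))
    rw [inner_dirU_hardTraj_succ hμ hη]
    push_cast
    rcases le_or_gt (3/10) q with hq | hq
    · have : 0 ≤ η * (12/625 * (2 - hardTraj μ η t 0) + μ * deficit (hardTraj μ η t)) :=
        mul_nonneg hη.1 (by linarith)
      exact (min_le_left _ _).trans (by linarith)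
    · have hdef : deficit (hardTraj μ η t) = 3/5 - q := max_eq_left (by linarith)
      have hμη := mul_nonneg hμ.1 hη.1
      calc min (3/10) (3/10 * μ * η * (t + 1))
          ≤ min (3/10 + 3/10 * μ * η) (3/10 * μ * η * t + 3/10 * μ * η) :=
            min_le_min (by linarith) (by linarith)
        _ = min (3/10) (3/10 * μ * η * t) + 3/10 * μ * η := min_add_add_right _ _ _
        _ ≤ _ := by rw [hdef]; nlinarith [mul_nonneg hη.1 (sub_nonneg.2 hx)]

end Trajectory

section Output
variable {μ η : ℝ} {T : ℕ}

lemma hardTraj_zero_one (hη : η ∈ Set.Icc 0 1) (t : ℕ) : hardTraj 0 η t 1 = 0 := by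
  induction t with
  | zero => simp
  | succ t ih => rw [hardTraj_succ_one (by norm_num) hη, ih]; ring

lemma one_twentieth_le_hardTraj_one (hη : η ∈ Set.Icc 0 1) {t : ℕ} (h₁ : 5/4 ≤ η * t)
    (h₂ : η * t ≤ 9/4) : 1/20 ≤ hardTraj (4/5) η t 1 := by
  have hμ : (4/5 : ℝ) ∈ Set.Icc 0 (4/5) := by norm_num
  have hq := min_le_inner_dirU_hardTraj hμ hη t
  rw [min_eq_left (by nlinarith)] at hq
  nlinarith [hardTraj_one_ge_sub hμ hη t]

lemma gdOut_hardLoss_eq :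
    gdOut (hardLoss μ) η T = (T : ℝ)⁻¹ • ∑ t ∈ Finset.range T, hardTraj μ η t :=
  rfl

lemma gdOut_hardLoss_apply (i : Fin 2) :
    gdOut (hardLoss μ) η T i = (T : ℝ)⁻¹ * ∑ t ∈ Finset.range T, hardTraj μ η t i := by
  simp [gdOut_hardLoss_eq, WithLp.ofLp_sum]

lemma gdOut_hardLoss_mem_wedge (hμ : μ ∈ Set.Icc 0 (4/5)) (hη : η ∈ Set.Icc 0 1) (hT : 0 < T) :
    gdOut (hardLoss μ) η T ∈ wedge := by
  rw [gdOut_hardLoss_eq, Finset.smul_sum]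
  exact convex_wedge.sum_mem (fun _ _ => by positivity) (by simp [hT.ne'])
    fun t _ => hardTraj_mem_wedge hμ hη t

lemma two_sub_gdOut_hardLoss_le (hμ : μ ∈ Set.Icc 0 (4/5)) (hη : η ∈ Set.Icc 0 1) (hη₀ : 0 < η)
    (hT : 0 < T) : 2 - gdOut (hardLoss μ) η T 0 ≤ 100 / (η * T) := by
  have hT' : (T : ℝ) ≠ 0 := Nat.cast_ne_zero.2 hT.ne'
  have h := sum_two_sub_hardTraj_le hμ hη hη₀ T
  rw [Finset.sum_sub_distrib, Finset.sum_const, Finset.card_range, nsmul_eq_mul] at h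
  calc 2 - gdOut (hardLoss μ) η T 0
      = (T : ℝ)⁻¹ * (T * 2 - ∑ t ∈ Finset.range T, hardTraj μ η t 0) := by
        rw [gdOut_hardLoss_apply]; field_simp
    _ ≤ (T : ℝ)⁻¹ * (100 / η) := by gcongr
    _ = 100 / (η * T) := by field_simp

lemma gdOut_hardLoss_zero_one (hη : η ∈ Set.Icc 0 1) : gdOut (hardLoss 0) η T 1 = 0 := by
  simp [gdOut_hardLoss_apply, hardTraj_zero_one hη]

lemma one_div_twentyFive_le_gdOut_hardLoss_one (hη : η ∈ Set.Icc 0 1) (hη₀ : 0 < η)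
    (hT : 45/4 ≤ η * T) : 1/25 ≤ gdOut (hardLoss (4/5)) η T 1 := by
  -- after `N ≈ 5/(4η)` steps the second coordinate has reached `1/20`, and `N ≤ T/5`
  set N := ⌈5 / (4 * η)⌉₊
  have hN₁ : 5/4 ≤ η * N := by
    have := Nat.le_ceil (5 / (4 * η))
    rw [div_le_iff₀ (by positivity)] at this
    linarith
  have hN₂ : η * N ≤ 9/4 := by
    have := Nat.ceil_lt_add_one (by positivity : 0 ≤ 5 / (4 * η))
    have h : η * (5 / (4 * η)) = 5/4 := by field_simp
    nlinarith [hη.2]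
  have hNT : (N : ℝ) ≤ T / 5 := by
    rw [le_div_iff₀ (by norm_num)]; nlinarith
  have hT₀ : (0 : ℝ) < T := by nlinarith
  have hNT' : N ≤ T := by exact_mod_cast (hNT.trans (by linarith) : (N : ℝ) ≤ T)
  have hsum : ((T : ℝ) - N) * (1/20) ≤ ∑ t ∈ Finset.range T, hardTraj (4/5) η t 1 := by
    rw [← Finset.sum_range_add_sum_Ico _ hNT']
    have h₁ : 0 ≤ ∑ t ∈ Finset.range N, hardTraj (4/5) η t 1 :=
      Finset.sum_nonneg fun t _ => (hardTraj_mem_wedge (by norm_num) hη t).1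
    have h₂ := Finset.card_nsmul_le_sum (Finset.Ico N T) (fun t => hardTraj (4/5) η t 1) (1/20)
      fun t ht => (one_twentieth_le_hardTraj_one hη hN₁ hN₂).trans
        (monotone_hardTraj_one (by norm_num) hη (Finset.mem_Ico.1 ht).1)
    rw [Nat.card_Ico, nsmul_eq_mul, Nat.cast_sub hNT'] at h₂
    linarith
  rw [gdOut_hardLoss_apply, le_inv_mul_iff₀ hT₀]
  linarith

lemma exists_one_div_fifty_le_abs_gdOut_hardLoss_one_sub (y : ℝ) :
    ∃ μ ∈ Set.Icc (0 : ℝ) (4/5), ∀ (T : ℕ) (η : ℝ), η ∈ Set.Icc 0 1 → 0 < η → 45/4 ≤ η * T →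
      1/50 ≤ |gdOut (hardLoss μ) η T 1 - y| := by
  by_cases hy : 1/50 ≤ y
  · refine ⟨0, by norm_num, fun T η hη _ _ => ?_⟩
    rw [gdOut_hardLoss_zero_one hη, zero_sub, abs_neg]
    exact hy.trans (le_abs_self _)
  · refine ⟨4/5, by norm_num, fun T η hη hη₀ hT => ?_⟩
    have := one_div_twentyFive_le_gdOut_hardLoss_one hη hη₀ hT
    exact le_abs.2 (Or.inl (by linarith))

end Output

namespace StronglyConvexOn'
variable {lam : ℝ} {r : Euc 2 → ℝ}

lemma add_half_mul_sq_le_of_isMinOn {W S : Set (Euc 2)} {q a : Euc 2}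
    (hr : StronglyConvexOn' W lam r) (hS : Convex ℝ S) (hSW : S ⊆ W) (hq : q ∈ S)
    (hmin : IsMinOn r S q) (ha : a ∈ S) : r q + lam / 2 * ‖a - q‖ ^ 2 ≤ r a := by
  -- add the defining inequalities at the midpoint `m`: the gradient terms cancel
  set m : Euc 2 := (1/2 : ℝ) • a + (1/2 : ℝ) • q
  have hm : m ∈ S := hS ha hq (by norm_num) (by norm_num) (by norm_num)
  have h₁ := hr a (hSW ha) m (hSW hm)
  have h₂ := hr q (hSW hq) m (hSW hm)
  rw [show a - m = (1/2 : ℝ) • (a - q) by module] at h₁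
  rw [show q - m = -((1/2 : ℝ) • (a - q)) by module, inner_neg_right, norm_neg] at h₂
  rw [norm_smul, mul_pow] at h₁ h₂
  norm_num at h₁ h₂
  linarith [isMinOn_iff.1 hmin m hm]

lemma mul_le_one {R : ℝ} (hr : StronglyConvexOn' (closedBall 0 R) lam r)
    (hL : LipschitzOnWith 1 r (closedBall 0 R)) (hR : 0 < R) : lam * R ≤ 1 := by
  -- at `±p` with `‖p‖ = R`: `2 lam R² ≤ r p + r (-p) - 2 r 0 ≤ 2 R`
  set p : Euc 2 := !₂[R, 0]
  have hp : ‖p‖ = R := by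
    rw [← sq_eq_sq₀ (norm_nonneg _) hR.le, norm_sq_eq_two]; simp [p]
  have h₀ : (0 : Euc 2) ∈ closedBall 0 R := mem_closedBall_self hR.le
  have hpR : p ∈ closedBall 0 R := by simp [hp]
  have hnR : -p ∈ closedBall 0 R := by simp [hp]
  have h₁ := hr p hpR 0 h₀
  have h₂ := hr (-p) hnR 0 h₀
  have l₁ := hL.dist_le_mul p hpR 0 h₀
  have l₂ := hL.dist_le_mul (-p) hnR 0 h₀
  simp only [sub_zero, inner_neg_right, norm_neg, hp, Real.dist_eq, dist_zero_right,
    NNReal.coe_one, one_mul] at h₁ h₂ l₁ l₂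
  nlinarith [le_abs_self (r p - r 0), le_abs_self (r (-p) - r 0)]

end StronglyConvexOn'

def flatSegment : Set (Euc 2) := segment ℝ !₂[2, 0] !₂[2, 1]

lemma flatSegment_eq_image : flatSegment = (fun s : ℝ => !₂[2, s]) '' Set.Icc 0 1 := by
  rw [flatSegment, segment_eq_image]
  congr 1
  funext s
  ext i
  fin_cases i
  · simp; ring
  · simp

lemma isCompact_flatSegment : IsCompact flatSegment := by
  rw [flatSegment_eq_image]
  exact isCompact_Icc.image (by fun_prop)

lemma flatSegment_subset_closedBall : flatSegment ⊆ closedBall 0 5 := by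
  refine (convex_closedBall 0 5).segment_subset ?_ ?_ <;>
    rw [mem_closedBall_zero_iff, ← sq_le_sq₀ (norm_nonneg _) (by norm_num), norm_sq_eq_two] <;>
    norm_num

lemma hardLoss_eq_zero_of_mem_flatSegment {μ : ℝ} {w : Euc 2} (hw : w ∈ flatSegment) :
    hardLoss μ w = 0 := by
  rw [flatSegment_eq_image] at hw
  obtain ⟨s, hs, rfl⟩ := hw
  rw [hardLoss, smoothHinge_of_nonpos, smoothHinge_of_nonpos]
  · ring
  · rw [inner_dirU]; simp; linarith [hs.1]
  · simp [inner_dirX]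

lemma StronglyConvexOn'.le_sub_of_isMinOn_flatSegment {lam : ℝ} {r : Euc 2 → ℝ} {q w : Euc 2}
    (hr : StronglyConvexOn' (closedBall 0 5) lam r) (hL : LipschitzOnWith 1 r (closedBall 0 5))
    (hq : q ∈ flatSegment) (hmin : IsMinOn r flatSegment q) (hw : w ∈ wedge)
    (hclose : 2 - w 0 ≤ lam / 10^4) (hsep : 1/50 ≤ |w 1 - q 1|) :
    r q ≤ r w - lam / 10^4 := by
  obtain ⟨h₁, h₂, h₃⟩ := hw
  set a : Euc 2 := !₂[2, w 1]
  have ha : a ∈ flatSegment := by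
    rw [flatSegment_eq_image]; exact ⟨w 1, ⟨h₁, by linarith⟩, rfl⟩
  have hgrowth := hr.add_half_mul_sq_le_of_isMinOn (convex_segment _ _)
    flatSegment_subset_closedBall hq hmin ha
  have haq : 1/50 ≤ ‖a - q‖ := hsep.trans (by simpa [a] using PiLp.norm_apply_le (a - q) 1)
  have haw : ‖a - w‖ = 2 - w 0 := by
    rw [← sq_eq_sq₀ (norm_nonneg _) (by linarith), norm_sq_eq_two]; simp [a]
  have hlip := hL.dist_le_mul a (flatSegment_subset_closedBall ha) w
    (mem_closedBall_zero_iff.2 (norm_le_of_mem_wedge ⟨h₁, h₂, h₃⟩))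
  rw [Real.dist_eq, dist_eq_norm, haw, NNReal.coe_one, one_mul] at hlip
  nlinarith [le_abs_self (r a - r w), mul_le_mul haq haq (by norm_num) (norm_nonneg _)]

theorem stmt0 :
    ∃ c₁ > (0 : ℝ), ∃ c₂ > (0 : ℝ),
      ∀ (lam : ℝ), 0 < lam →
      ∀ r : Euc 2 → ℝ,
        LipschitzOnWith 1 r (closedBall 0 5) →
        StronglyConvexOn' (closedBall 0 5) lam r →
        ∃ F : Euc 2 → ℝ, ∃ wr ∈ closedBall (0 : Euc 2) 5,
          (∀ w ∈ closedBall (0 : Euc 2) 5, 0 ≤ F w) ∧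
          ConvexOn ℝ (closedBall 0 5) F ∧
          LipschitzOnWith 1 F (closedBall 0 5) ∧
          LipschitzOnWith 1 (fun w => gradient F w) (closedBall 0 5) ∧
          ∀ (T : ℕ) (η : ℝ), 1 / (T : ℝ) ^ 2 < η → η < 1 → c₁ / (lam * η) ≤ (T : ℝ) →
            F wr ≤ F (gdOut F η T) ∧
            r wr ≤ r (gdOut F η T) - c₂ * lam := by
  refine ⟨10^6, by norm_num, 1/10^4, by norm_num, fun lam hlam r hL hr => ?_⟩
  obtain ⟨q, hq, hmin⟩ := isCompact_flatSegment.exists_isMinOn ⟨_, left_mem_segment ℝ _ _⟩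
    (hL.continuousOn.mono flatSegment_subset_closedBall)
  have hlam := hr.mul_le_one hL (by norm_num)
  obtain ⟨μ, hμ, hsep⟩ := exists_one_div_fifty_le_abs_gdOut_hardLoss_one_sub (q 1)
  refine ⟨hardLoss μ, q, flatSegment_subset_closedBall hq, fun w _ => hardLoss_nonneg hμ.1 w,
    (convexOn_hardLoss hμ.1).subset (Set.subset_univ _) (convex_closedBall _ _),
    (lipschitzWith_hardLoss hμ).lipschitzOnWith,
    (lipschitzWith_gradient_hardLoss hμ).lipschitzOnWith, fun T η hTη hη₁ hT => ?_⟩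
  have hη₀ : 0 < η := lt_of_le_of_lt (by positivity) hTη
  have hη : η ∈ Set.Icc 0 1 := ⟨hη₀.le, hη₁.le⟩
  rw [div_le_iff₀ (by positivity)] at hT
  have hT₀ : 0 < T := Nat.pos_of_ne_zero (by rintro rfl; norm_num at hT)
  refine ⟨by rw [hardLoss_eq_zero_of_mem_flatSegment hq]; exact hardLoss_nonneg hμ.1 _, ?_⟩
  refine (hr.le_sub_of_isMinOn_flatSegment hL hq hmin (gdOut_hardLoss_mem_wedge hμ hη hT₀) ?_
    (hsep T η hη hη₀ (by nlinarith))).trans_eq (by ring)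
  calc 2 - gdOut (hardLoss μ) η T 0 ≤ 100 / (η * T) := two_sub_gdOut_hardLoss_le hμ hη hη₀ hT₀
    _ ≤ lam / 10^4 := by
      rw [div_le_div_iff₀ (by positivity) (by norm_num)]; nlinarith

end
end

section
/- For every constants c > 0 and ρ > 0, there exist two convex ρ-Lipschitz functions f(·; 1) and f(·; −1) on ℝ² such that for every η with c < η < 1, setting v_{z,η} = −η∇f(0; z) for z ∈ {−1, 1}, the following hold: (i) f(v_{1,η}; z) = f(v_{−1,η}; z) for each z ∈ {−1, 1}; (ii) f is differentiable at v_{1,η} and v_{−1,η} with ∇f(v_{1,η}; z) = ∇f(v_{−1,η}; z) = 0 for each z ∈ {−1, 1}; and (iii) ‖v_{1,η} − v_{−1,η}‖ ≥ ρη/4. -/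
/-! Take hinges `f(w; z) = ρ · max(0, a - ⟪u_z, w⟫)` with the unit vectors `u_{±1} = (±3/5, 4/5)`
and `a = cρ/4`. Near the origin `f(·; z)` is affine with gradient `-ρ u_z`, so `v_{z,η} = ηρ u_z`.
Since `⟪u_z, u_{z'}⟫ ≥ 7/25 > 1/4` and `η > c`, every `v_{z',η}` lies in the open half-space
`⟪u_z, w⟫ > a` on which `f(·; z)` vanishes identically; this gives (i) and (ii), and
`‖v_{1,η} - v_{-1,η}‖ = 6ρη/5`. -/

noncomputable section

open Topology
open scoped RealInnerProductSpace

section Hinge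

variable {E : Type*} [NormedAddCommGroup E] [InnerProductSpace ℝ E]

def hinge (ρ a : ℝ) (v w : E) : ℝ := ρ * max 0 (a - ⟪v, w⟫)

lemma convexOn_hinge {ρ : ℝ} (hρ : 0 ≤ ρ) (a : ℝ) (v : E) :
    ConvexOn ℝ Set.univ (hinge ρ a v) := by
  have hlin : ConvexOn ℝ Set.univ fun w => a - ⟪v, w⟫ :=
    (convexOn_const a convex_univ).sub ((innerₗ E v).concaveOn convex_univ)
  exact ((convexOn_const 0 convex_univ).sup hlin).smul hρ

lemma lipschitzWith_hinge (ρ a : ℝ) (v : E) :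
    LipschitzWith (‖ρ‖₊ * ‖v‖₊) (hinge ρ a v) := by
  have hinner : LipschitzWith ‖v‖₊ fun w => ⟪v, w⟫ := by
    have hnorm : ‖innerSL ℝ v‖₊ = ‖v‖₊ := NNReal.eq (innerSL_apply_norm ℝ v)
    exact hnorm ▸ (innerSL ℝ v).lipschitz
  have h := (lipschitzWith_smul ρ).comp
    (((IsometryEquiv.subLeft a).isometry.lipschitz.comp hinner).const_max 0)
  rw [one_mul] at h
  exact h

lemma hinge_eventuallyEq_zero {ρ a : ℝ} {v x : E} (hx : a < ⟪v, x⟫) :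
    hinge ρ a v =ᶠ[𝓝 x] 0 := by
  filter_upwards [((innerSL ℝ v).continuous.tendsto x).eventually_const_lt hx]
    with w (hw : a < ⟪v, w⟫)
  rw [hinge, max_eq_left (sub_nonpos.2 (hw.le)), mul_zero, Pi.zero_apply]

variable [CompleteSpace E]

lemma hasGradientAt_hinge_of_inner_lt (ρ : ℝ) {a : ℝ} {v x : E} (hx : ⟪v, x⟫ < a) :
    HasGradientAt (hinge ρ a v) (-ρ • v) x := by
  have hlin : HasGradientAt (fun w => ρ * a + ⟪-ρ • v, w⟫) (-ρ • v) x := by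
    rw [hasGradientAt_iff_hasFDerivAt]
    exact ((InnerProductSpace.toDual ℝ E (-ρ • v)).hasFDerivAt (x := x)).const_add (ρ * a)
  refine hlin.congr_of_eventuallyEq ?_
  filter_upwards [((innerSL ℝ v).continuous.tendsto x).eventually_lt_const hx]
    with w (hw : ⟪v, w⟫ < a)
  rw [hinge, max_eq_right (sub_nonneg.2 (hw.le)), real_inner_smul_left]
  ring

lemma hasGradientAt_hinge_of_lt_inner (ρ : ℝ) {a : ℝ} {v x : E} (hx : a < ⟪v, x⟫) :
    HasGradientAt (hinge ρ a v) 0 x :=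
  (hasGradientAt_const x 0).congr_of_eventuallyEq (hinge_eventuallyEq_zero hx)

end Hinge

-- `true` encodes `z = 1` and `false` encodes `z = -1`.
def hingeDir (z : Bool) : Euc 2 := !₂[if z then 3 / 5 else -3 / 5, 4 / 5]

lemma inner_hingeDir (z z' : Bool) :
    ⟪hingeDir z, hingeDir z'⟫ = if z = z' then 1 else 7 / 25 := by
  cases z <;> cases z' <;>
    simp only [hingeDir, PiLp.inner_apply, RCLike.inner_apply, Real.ringHom_apply,
      Fin.sum_univ_two, Matrix.cons_val_zero, Matrix.cons_val_one] <;> norm_num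

lemma norm_hingeDir (z : Bool) : ‖hingeDir z‖ = 1 := by
  rw [← sq_eq_sq₀ (norm_nonneg _) zero_le_one, ← real_inner_self_eq_norm_sq, inner_hingeDir,
    if_pos rfl, one_pow]

lemma norm_hingeDir_sub : ‖hingeDir true - hingeDir false‖ = 6 / 5 := by
  rw [← sq_eq_sq₀ (norm_nonneg _) (by norm_num), norm_sub_sq_real, norm_hingeDir, norm_hingeDir,
    inner_hingeDir]
  norm_num

theorem stmt12 (c ρ : ℝ) (hc : 0 < c) (hρ : 0 < ρ) :
    ∃ f : Bool → Euc 2 → ℝ,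
      (∀ z : Bool, ConvexOn ℝ Set.univ (f z) ∧ LipschitzWith ρ.toNNReal (f z)) ∧
      (∀ z : Bool, DifferentiableAt ℝ (f z) 0) ∧
      ∀ η : ℝ, c < η → η < 1 →
        (∀ z : Bool,
          f z (-(η • gradient (f true) 0)) = f z (-(η • gradient (f false) 0))) ∧
        (∀ z z' : Bool, HasGradientAt (f z) 0 (-(η • gradient (f z') 0))) ∧
        ρ * η / 4 ≤ ‖(-(η • gradient (f true) 0)) - (-(η • gradient (f false) 0))‖ := by
  set a := c * ρ / 4 with ha
  have hgrad0 (z : Bool) : HasGradientAt (hinge ρ a (hingeDir z)) (-ρ • hingeDir z) 0 :=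
    hasGradientAt_hinge_of_inner_lt ρ (by rw [inner_zero_right]; positivity)
  refine ⟨fun z => hinge ρ a (hingeDir z), fun z => ⟨convexOn_hinge hρ.le a _, ?_⟩,
    fun z => (hgrad0 z).differentiableAt, fun η hcη _ => ?_⟩
  · have h := lipschitzWith_hinge ρ a (hingeDir z)
    rwa [show ‖hingeDir z‖₊ = 1 from Subtype.ext (norm_hingeDir z), mul_one,
      ← Real.toNNReal_eq_nnnorm_of_nonneg hρ.le] at h
  have hη : 0 < η := hc.trans hcη
  have hpoint (z : Bool) : -(η • gradient (hinge ρ a (hingeDir z)) 0) = (η * ρ) • hingeDir z := by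
    rw [(hgrad0 z).gradient, smul_smul, ← neg_smul, mul_neg, neg_neg]
  have hflat (z z' : Bool) : a < ⟪hingeDir z, (η * ρ) • hingeDir z'⟫ := by
    have h := inner_hingeDir z z'
    rw [real_inner_smul_right]
    split_ifs at h <;> rw [h] <;> nlinarith [mul_lt_mul_of_pos_right hcη hρ]
  simp only [hpoint]
  refine ⟨fun z => ?_, fun z z' => hasGradientAt_hinge_of_lt_inner ρ (hflat z z'), ?_⟩
  · rw [(hinge_eventuallyEq_zero (hflat z true)).eq_of_nhds,
      (hinge_eventuallyEq_zero (hflat z false)).eq_of_nhds, Pi.zero_apply, Pi.zero_apply]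
  · rw [← smul_sub, norm_smul, norm_hingeDir_sub, Real.norm_of_nonneg (by positivity)]
    nlinarith

end
end
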